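/- arXiv:2405.02708 — 2 statements merged into one kernel-verified Lean document; each statement's English description precedes it below -/
import Mathlib

section
/- For every n ≥ 2, the n-dimensional Niemytzki space (X, τ_N) is Tychonoff: it is T1 and completely regular (every point and closed set not containing it are separated by a continuous real-valued function). -/
open Metric Set TopologicalSpace

noncomputable section

/-- The last coordinate `x (n-1)` of a point of `EuclideanSpace ℝ (Fin n)`
(junk value `0` if `n = 0`). -/
def lastCoord (n : ℕ) (x : EuclideanSpace ℝ (Fin n)) : ℝ :=
  if h : 0 < n then x ⟨n - 1, Nat.sub_lt h one_pos⟩ else 0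

/-- The closed upper half-space `X = {x : x (n-1) ≥ 0}`. -/
def HalfSpace (n : ℕ) : Set (EuclideanSpace ℝ (Fin n)) := {x | 0 ≤ lastCoord n x}

/-- The open upper half-space `P = {x : x (n-1) > 0}`. -/
def OpenHalf (n : ℕ) : Set (EuclideanSpace ℝ (Fin n)) := {x | 0 < lastCoord n x}

/-- The boundary hyperplane `L = {x : x (n-1) = 0}`. -/
def Bdry (n : ℕ) : Set (EuclideanSpace ℝ (Fin n)) := {x | lastCoord n x = 0}

/-- The `n`-th standard basis vector `e` (junk value `0` if `n = 0`). -/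
def eVec (n : ℕ) : EuclideanSpace ℝ (Fin n) :=
  if h : 0 < n then EuclideanSpace.single ⟨n - 1, Nat.sub_lt h one_pos⟩ (1 : ℝ) else 0

/-- The tangent ball `B̃(a, ε) = {a} ∪ B(a + ε • e, ε)`. -/
def tangentBall (n : ℕ) (a : EuclideanSpace ℝ (Fin n)) (ε : ℝ) :
    Set (EuclideanSpace ℝ (Fin n)) :=
  {a} ∪ ball (a + ε • eVec n) ε

/-- The generating family for the topology `τ(A)` on `X`:
balls `B(a,ε)` with `a ∈ P`, `0 < ε < a (n-1)`; traces `B(a,ε) ∩ X` with `a ∈ A`, `ε > 0`;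
and tangent balls `B̃(a,ε)` with `a ∈ L \ A`, `ε > 0`. -/
def niemGen (n : ℕ) (A : Set (EuclideanSpace ℝ (Fin n))) : Set (Set (HalfSpace n)) :=
  {s | ∃ a ∈ OpenHalf n, ∃ ε, 0 < ε ∧ ε < lastCoord n a ∧
      s = Subtype.val ⁻¹' ball a ε} ∪
  {s | ∃ a ∈ A, ∃ ε, 0 < ε ∧ s = Subtype.val ⁻¹' ball a ε} ∪
  {s | ∃ a ∈ Bdry n \ A, ∃ ε, 0 < ε ∧ s = Subtype.val ⁻¹' tangentBall n a ε}

/-- The topology `τ(A)` on `X`; `τ(∅)` is the Niemytzki topology `τ_N`. -/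
def tau (n : ℕ) (A : Set (EuclideanSpace ℝ (Fin n))) : TopologicalSpace (HalfSpace n) :=
  generateFrom (niemGen n A)

/-- The inclusion of `L` into `X`. -/
def inclLX (n : ℕ) (x : Bdry n) : HalfSpace n := ⟨x.1, le_of_eq x.2.symm⟩

/-- The subspace topology `τ(A)|_L` on `L` induced from `(X, τ(A))`. -/
def tauL (n : ℕ) (A : Set (EuclideanSpace ℝ (Fin n))) : TopologicalSpace (Bdry n) :=
  TopologicalSpace.induced (inclLX n) (tau n A)

/-- A space is perfect if every closed set is a `Gδ`-set. -/
def IsPerfectSpace (X : Type*) [TopologicalSpace X] : Prop :=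
  ∀ s : Set X, IsClosed s → IsGδ s

/-- An `Fσ`-set: a countable union of closed sets. -/
def IsFsigma {X : Type*} [TopologicalSpace X] (s : Set X) : Prop :=
  ∃ F : ℕ → Set X, (∀ i, IsClosed (F i)) ∧ s = ⋃ i, F i

/-- Countably paracompact: every countable open cover admits a locally finite open refinement. -/
def CountablyParacompact (X : Type*) [TopologicalSpace X] : Prop :=
  ∀ u : ℕ → Set X, (∀ i, IsOpen (u i)) → (⋃ i, u i) = Set.univ →
    ∃ (ι : Type) (v : ι → Set X), (∀ j, IsOpen (v j)) ∧ (⋃ j, v j) = Set.univ ∧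
      LocallyFinite v ∧ ∀ j, ∃ i, v j ⊆ u i

/-- A zero set: the zero locus of a continuous real-valued function. -/
def IsZeroSet {X : Type*} [TopologicalSpace X] (s : Set X) : Prop :=
  ∃ f : X → ℝ, Continuous f ∧ s = f ⁻¹' {0}

/-- `Y` is z-embedded in `X` if every zero set of the subspace `Y`
is the trace on `Y` of a zero set of `X`. -/
def ZEmbedded {X : Type*} [TopologicalSpace X] (Y : Set X) : Prop :=
  ∀ s : Set Y, IsZeroSet s → ∃ Z : Set X, IsZeroSet Z ∧ s = Subtype.val ⁻¹' Z

/-- `Y` is `C*`-embedded in `X` if every bounded continuous real-valued function on the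
subspace `Y` extends to a bounded continuous function on `X`. -/
def CStarEmbedded {X : Type*} [TopologicalSpace X] (Y : Set X) : Prop :=
  ∀ f : Y → ℝ, Continuous f → (∃ M, ∀ y, |f y| ≤ M) →
    ∃ g : X → ℝ, Continuous g ∧ (∃ M, ∀ x, |g x| ≤ M) ∧ ∀ y : Y, g ↑y = f y
end

/-! The Niemytzki topology is finer than the Euclidean one, hence `T1`, and away from `L` it is
Euclidean, so there points are separated from closed sets by Euclidean distance functions.
At `a ∈ L` one uses `f(y) = min 1 (‖y - a‖² / (2 ε y_{n-1}))`, with `f(a) = 0` and `f = 1` on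
`L \ {a}`: its level set `{f = t}` for `t < 1` is the sphere of radius `t ε` tangent to `L` at
`a`, so `f` is small on small tangent balls at `a`, and it is `1` outside `B̃(a, ε)`, in
particular on small tangent balls at the other points of `L`. -/

open Topology

section Geometry

variable {n : ℕ}

theorem lastCoord_eq_inner (hn : 0 < n) (x : EuclideanSpace ℝ (Fin n)) :
    lastCoord n x = inner ℝ x (eVec n) := by
  simp [lastCoord, eVec, hn, EuclideanSpace.inner_single_right]

theorem norm_eVec (hn : 0 < n) : ‖eVec n‖ = 1 := by
  simp [eVec, hn]

theorem lastCoord_sub (hn : 0 < n) (x y : EuclideanSpace ℝ (Fin n)) :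
    lastCoord n (x - y) = lastCoord n x - lastCoord n y := by
  simp only [lastCoord_eq_inner hn, inner_sub_left]

theorem continuous_lastCoord (hn : 0 < n) : Continuous (lastCoord n) := by
  rw [show lastCoord n = fun x => inner ℝ x (eVec n) from funext (lastCoord_eq_inner hn)]
  fun_prop

theorem abs_lastCoord_sub_le_dist (hn : 0 < n) (x y : EuclideanSpace ℝ (Fin n)) :
    |lastCoord n x - lastCoord n y| ≤ dist x y := by
  rw [← lastCoord_sub hn, lastCoord_eq_inner hn, dist_eq_norm]
  simpa [norm_eVec hn] using abs_real_inner_le_norm (x - y) (eVec n)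

theorem norm_add_smul_eVec_sq (hn : 0 < n) (v : EuclideanSpace ℝ (Fin n)) (t : ℝ) :
    ‖v + t • eVec n‖ ^ 2 = ‖v‖ ^ 2 + 2 * t * lastCoord n v + t ^ 2 := by
  rw [norm_add_sq_real, inner_smul_right, ← lastCoord_eq_inner hn, norm_smul, norm_eVec hn,
    Real.norm_eq_abs, mul_one, sq_abs]
  ring

theorem dist_add_smul_eVec_add_smul_eVec_sq (hn : 0 < n) (a b : EuclideanSpace ℝ (Fin n))
    (s t : ℝ) :
    dist (a + s • eVec n) (b + t • eVec n) ^ 2 =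
      ‖a - b‖ ^ 2 + 2 * (s - t) * lastCoord n (a - b) + (s - t) ^ 2 := by
  rw [dist_eq_norm, ← norm_add_smul_eVec_sq hn, sub_smul]
  congr 2
  abel

variable {a : EuclideanSpace ℝ (Fin n)} {ε : ℝ}

theorem mem_ball_add_smul_eVec_iff (hn : 0 < n) (ha : lastCoord n a = 0) (hε : 0 < ε)
    (y : EuclideanSpace ℝ (Fin n)) :
    y ∈ ball (a + ε • eVec n) ε ↔ ‖y - a‖ ^ 2 < 2 * ε * lastCoord n y := by
  have h := dist_add_smul_eVec_add_smul_eVec_sq hn y a 0 ε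
  rw [zero_smul, add_zero, lastCoord_sub hn, ha] at h
  rw [mem_ball, ← pow_lt_pow_iff_left₀ dist_nonneg hε.le two_ne_zero, h]
  constructor <;> intro <;> linarith

theorem lastCoord_pos_of_mem_ball_add_smul_eVec (hn : 0 < n) (ha : lastCoord n a = 0)
    (hε : 0 < ε) {y : EuclideanSpace ℝ (Fin n)} (hy : y ∈ ball (a + ε • eVec n) ε) :
    0 < lastCoord n y := by
  rw [mem_ball_add_smul_eVec_iff hn ha hε] at hy
  nlinarith [sq_nonneg ‖y - a‖]

theorem tangentBall_mono (hn : 0 < n) {δ : ℝ} (h : δ ≤ ε) :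
    tangentBall n a δ ⊆ tangentBall n a ε := by
  refine union_subset_union_right _ (ball_subset_ball' ?_)
  rw [dist_add_left, dist_eq_norm, ← sub_smul, norm_smul, norm_eVec hn, mul_one,
    Real.norm_eq_abs, abs_of_nonpos (by linarith)]
  linarith

theorem tangentBall_subset_ball (hn : 0 < n) (hε : 0 < ε) :
    tangentBall n a ε ⊆ ball a (2 * ε) := by
  refine union_subset (singleton_subset_iff.2 (mem_ball_self (by positivity)))
    (ball_subset_ball' ?_)
  rw [dist_eq_norm, add_sub_cancel_left, norm_smul, norm_eVec hn, mul_one, Real.norm_eq_abs,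
    abs_of_pos hε]
  linarith

/-- The hypothesis `4 ε δ ≤ ‖a - p‖²` says exactly that the centres are at least `ε + δ` apart. -/
theorem disjoint_tangentBall (hn : 0 < n) {p : EuclideanSpace ℝ (Fin n)} (ha : lastCoord n a = 0)
    (hp : lastCoord n p = 0) (hap : a ≠ p) (hε : 0 < ε) {δ : ℝ} (hδ : 0 < δ)
    (h : 4 * ε * δ ≤ ‖a - p‖ ^ 2) : Disjoint (tangentBall n a ε) (tangentBall n p δ) := by
  have hcentres : ε + δ ≤ dist (a + ε • eVec n) (p + δ • eVec n) := by
    have hd := dist_add_smul_eVec_add_smul_eVec_sq hn a p ε δ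
    rw [lastCoord_sub hn, ha, hp] at hd
    nlinarith [dist_nonneg (x := a + ε • eVec n) (y := p + δ • eVec n)]
  simp only [tangentBall, disjoint_union_left, disjoint_union_right]
  refine ⟨⟨disjoint_singleton.2 hap, disjoint_singleton_right.2 fun h => ?_⟩,
    disjoint_singleton_left.2 fun h => ?_, ball_disjoint_ball hcentres⟩
  · exact (lastCoord_pos_of_mem_ball_add_smul_eVec hn ha hε h).ne' hp
  · exact (lastCoord_pos_of_mem_ball_add_smul_eVec hn hp hδ h).ne' ha

end Geometry

section NiemytzkiTopology

variable {n : ℕ}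

theorem lastCoord_pos_or_eq_zero (x : HalfSpace n) :
    0 < lastCoord n x.1 ∨ lastCoord n x.1 = 0 :=
  (show 0 ≤ lastCoord n x.1 from x.2).lt_or_eq.imp_right Eq.symm

theorem ball_mem_niemGen {a : EuclideanSpace ℝ (Fin n)} {r : ℝ} (hr : 0 < r)
    (hra : r < lastCoord n a) : Subtype.val ⁻¹' ball a r ∈ niemGen n ∅ :=
  Or.inl (Or.inl ⟨a, hr.trans hra, r, hr, hra, rfl⟩)

theorem tangentBall_mem_niemGen {a : EuclideanSpace ℝ (Fin n)} (ha : lastCoord n a = 0) {ε : ℝ}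
    (hε : 0 < ε) : Subtype.val ⁻¹' tangentBall n a ε ∈ niemGen n ∅ :=
  Or.inr ⟨a, ⟨ha, notMem_empty a⟩, ε, hε, rfl⟩

theorem tangentBall_mem_nhds {x : HalfSpace n} (hx : lastCoord n x.1 = 0) {ε : ℝ} (hε : 0 < ε) :
    Subtype.val ⁻¹' tangentBall n x.1 ε ∈ @nhds _ (tau n ∅) x :=
  @IsOpen.mem_nhds _ (tau n ∅) _ _
    (isOpen_generateFrom_of_mem (tangentBall_mem_niemGen hx hε)) (Or.inl rfl)

theorem exists_isOpen_subset_of_mem_niemGen {t : Set (HalfSpace n)} (ht : t ∈ niemGen n ∅) :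
    ∃ U : Set (EuclideanSpace ℝ (Fin n)), IsOpen U ∧ Subtype.val ⁻¹' U ⊆ t ∧
      ∀ x ∈ t, 0 < lastCoord n x.1 → x.1 ∈ U := by
  rcases ht with (⟨a, -, ε, -, -, rfl⟩ | ⟨a, ha, -⟩) | ⟨a, ⟨ha, -⟩, ε, -, rfl⟩
  · exact ⟨ball a ε, isOpen_ball, subset_rfl, fun x hx _ => hx⟩
  · exact absurd ha (notMem_empty a)
  · refine ⟨ball (a + ε • eVec n) ε, isOpen_ball, fun x hx => Or.inr hx, fun x hx hpos => ?_⟩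
    refine hx.resolve_left fun hxa => ?_
    rw [mem_singleton_iff.1 hxa, ha] at hpos
    exact hpos.false

theorem exists_ball_subset_of_mem_niemGen {t : Set (HalfSpace n)} (ht : t ∈ niemGen n ∅)
    {x : HalfSpace n} (hxt : x ∈ t) (hx : 0 < lastCoord n x.1) :
    ∃ r, 0 < r ∧ r < lastCoord n x.1 ∧ Subtype.val ⁻¹' ball x.1 r ⊆ t := by
  obtain ⟨U, hU, hUt, hxU⟩ := exists_isOpen_subset_of_mem_niemGen ht
  obtain ⟨r, hr, hrU⟩ := Metric.isOpen_iff.1 hU x.1 (hxU x hxt hx)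
  exact ⟨min r (lastCoord n x.1 / 2), lt_min hr (half_pos hx),
    (min_le_right _ _).trans_lt (half_lt_self hx),
    fun y hy => hUt (hrU (ball_subset_ball (min_le_left _ _) hy))⟩

theorem eq_tangentBall_of_mem_niemGen (hn : 0 < n) {t : Set (HalfSpace n)}
    (ht : t ∈ niemGen n ∅) {x : HalfSpace n} (hxt : x ∈ t) (hx : lastCoord n x.1 = 0) :
    ∃ ε, 0 < ε ∧ t = Subtype.val ⁻¹' tangentBall n x.1 ε := by
  rcases ht with (⟨a, -, ε, -, hεa, rfl⟩ | ⟨a, ha, -⟩) | ⟨a, ⟨ha, -⟩, ε, hε, rfl⟩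
  · have hxa : dist x.1 a < ε := hxt
    have h := abs_lastCoord_sub_le_dist hn x.1 a
    rw [hx, zero_sub, abs_neg] at h
    exact absurd (((le_abs_self _).trans h).trans_lt hxa) hεa.not_gt
  · exact absurd ha (notMem_empty a)
  · rcases hxt with hxa | hxt
    · exact ⟨ε, hε, by rw [mem_singleton_iff.1 hxa]⟩
    · exact absurd hx (lastCoord_pos_of_mem_ball_add_smul_eVec hn ha hε hxt).ne'

theorem isTopologicalBasis_niemGen (hn : 0 < n) :
    @IsTopologicalBasis (HalfSpace n) (tau n ∅) (niemGen n ∅) := by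
  let := tau n ∅
  refine ⟨fun t₁ ht₁ t₂ ht₂ x ⟨hx₁, hx₂⟩ => ?_, eq_univ_of_forall fun x => ?_, rfl⟩
  · rcases lastCoord_pos_or_eq_zero x with hx | hx
    · obtain ⟨r₁, hr₁, hr₁x, h₁⟩ := exists_ball_subset_of_mem_niemGen ht₁ hx₁ hx
      obtain ⟨r₂, hr₂, -, h₂⟩ := exists_ball_subset_of_mem_niemGen ht₂ hx₂ hx
      exact ⟨_, ball_mem_niemGen (lt_min hr₁ hr₂) ((min_le_left _ _).trans_lt hr₁x),
        mem_ball_self (lt_min hr₁ hr₂),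
        subset_inter ((preimage_mono (ball_subset_ball (min_le_left _ _))).trans h₁)
          ((preimage_mono (ball_subset_ball (min_le_right _ _))).trans h₂)⟩
    · obtain ⟨ε₁, hε₁, rfl⟩ := eq_tangentBall_of_mem_niemGen hn ht₁ hx₁ hx
      obtain ⟨ε₂, hε₂, rfl⟩ := eq_tangentBall_of_mem_niemGen hn ht₂ hx₂ hx
      exact ⟨_, tangentBall_mem_niemGen hx (lt_min hε₁ hε₂), Or.inl rfl,
        subset_inter (preimage_mono (tangentBall_mono hn (min_le_left _ _)))
          (preimage_mono (tangentBall_mono hn (min_le_right _ _)))⟩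
  · rcases lastCoord_pos_or_eq_zero x with hx | hx
    · exact ⟨_, ball_mem_niemGen (half_pos hx) (half_lt_self hx), mem_ball_self (half_pos hx)⟩
    · exact ⟨_, tangentBall_mem_niemGen hx one_pos, Or.inl rfl⟩

theorem continuous_subtypeVal_tau (hn : 0 < n) :
    Continuous[tau n ∅, _] (Subtype.val : HalfSpace n → EuclideanSpace ℝ (Fin n)) := by
  let := tau n ∅
  refine continuous_iff_continuousAt.2 fun x => Metric.tendsto_nhds.2 fun r hr => ?_
  rcases lastCoord_pos_or_eq_zero x with hx | hx
  · have hr' : 0 < min r (lastCoord n x.1 / 2) := lt_min hr (half_pos hx)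
    have hball := isOpen_generateFrom_of_mem
      (ball_mem_niemGen hr' ((min_le_right _ _).trans_lt (half_lt_self hx)))
    exact Filter.mem_of_superset (hball.mem_nhds (mem_ball_self hr'))
      (preimage_mono (ball_subset_ball (min_le_left _ _)))
  · exact Filter.mem_of_superset (tangentBall_mem_nhds hx (half_pos hr)) (preimage_mono
      ((tangentBall_subset_ball hn (half_pos hr)).trans (ball_subset_ball (by linarith))))

theorem t1Space_tau (hn : 0 < n) : @T1Space (HalfSpace n) (tau n ∅) :=
  let := tau n ∅
  t1Space_of_injective_of_continuous Subtype.val_injective (continuous_subtypeVal_tau hn)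

end NiemytzkiTopology

section TangentBump

variable {n : ℕ} {a : EuclideanSpace ℝ (Fin n)} {ε : ℝ}

open Classical in
noncomputable def tangentBump (n : ℕ) (a : EuclideanSpace ℝ (Fin n)) (ε : ℝ)
    (y : EuclideanSpace ℝ (Fin n)) : ℝ :=
  if lastCoord n y = 0 then (if y = a then 0 else 1)
  else min 1 (‖y - a‖ ^ 2 / (2 * ε * lastCoord n y))

theorem tangentBump_self (ha : lastCoord n a = 0) : tangentBump n a ε a = 0 := by
  simp [tangentBump, ha]

theorem tangentBump_of_pos {y : EuclideanSpace ℝ (Fin n)} (hy : 0 < lastCoord n y) :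
    tangentBump n a ε y = min 1 (‖y - a‖ ^ 2 / (2 * ε * lastCoord n y)) :=
  if_neg hy.ne'

theorem tangentBump_nonneg (hε : 0 ≤ ε) {y : EuclideanSpace ℝ (Fin n)} (hy : 0 ≤ lastCoord n y) :
    0 ≤ tangentBump n a ε y := by
  unfold tangentBump
  split_ifs <;> positivity

theorem tangentBump_eq_one (hn : 0 < n) (ha : lastCoord n a = 0) (hε : 0 < ε)
    {y : EuclideanSpace ℝ (Fin n)} (hy₀ : 0 ≤ lastCoord n y) (hy : y ∉ tangentBall n a ε) :
    tangentBump n a ε y = 1 := by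
  simp only [tangentBall, mem_union, mem_singleton_iff, not_or] at hy
  rcases hy₀.lt_or_eq with hpos | hzero
  · rw [mem_ball_add_smul_eVec_iff hn ha hε, not_lt] at hy
    rw [tangentBump_of_pos hpos, min_eq_left ((one_le_div (by positivity)).2 hy.2)]
  · rw [tangentBump, if_pos hzero.symm, if_neg hy.1]

theorem tangentBump_le_of_mem_tangentBall (hn : 0 < n) (ha : lastCoord n a = 0) (hε : 0 < ε)
    {δ : ℝ} (hδ : 0 < δ) {y : EuclideanSpace ℝ (Fin n)} (hy : y ∈ tangentBall n a δ) :
    tangentBump n a ε y ≤ δ / ε := by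
  rcases hy with hya | hy
  · rw [mem_singleton_iff.1 hya, tangentBump_self ha]
    positivity
  · have hpos := lastCoord_pos_of_mem_ball_add_smul_eVec hn ha hδ hy
    rw [mem_ball_add_smul_eVec_iff hn ha hδ] at hy
    rw [tangentBump_of_pos hpos]
    refine (min_le_right _ _).trans ?_
    rw [div_le_div_iff₀ (by positivity) hε]
    nlinarith

theorem continuousAt_tangentBump_of_pos (hn : 0 < n) (hε : 0 < ε) {p : HalfSpace n}
    (hp : 0 < lastCoord n p.1) :
    @ContinuousAt _ _ (tau n ∅) _ (fun y : HalfSpace n => tangentBump n a ε y.1) p := by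
  let := tau n ∅
  have hformula : ContinuousAt
      (fun y : EuclideanSpace ℝ (Fin n) => min 1 (‖y - a‖ ^ 2 / (2 * ε * lastCoord n y))) p.1 :=
    continuousAt_const.min (ContinuousAt.div (by fun_prop)
      (continuous_const.mul (continuous_lastCoord hn)).continuousAt (by positivity))
  have hP : {y : HalfSpace n | 0 < lastCoord n y.1} ∈ 𝓝 p :=
    (isOpen_lt continuous_const
      ((continuous_lastCoord hn).comp (continuous_subtypeVal_tau hn))).mem_nhds hp
  exact (hformula.comp (continuous_subtypeVal_tau hn).continuousAt).congr
    (Filter.mem_of_superset hP fun y hy => (tangentBump_of_pos hy).symm)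

theorem continuousAt_tangentBump_self (hn : 0 < n) (hε : 0 < ε) {p : HalfSpace n}
    (hp : lastCoord n p.1 = 0) :
    @ContinuousAt _ _ (tau n ∅) _ (fun y : HalfSpace n => tangentBump n p.1 ε y.1) p := by
  let := tau n ∅
  rw [ContinuousAt, tangentBump_self hp]
  refine tendsto_order.2 ⟨fun η hη => Filter.Eventually.of_forall fun y =>
    hη.trans_le (tangentBump_nonneg hε.le y.2), fun η hη => ?_⟩
  have hδ : 0 < ε * (η / 2) := by positivity
  refine Filter.mem_of_superset (tangentBall_mem_nhds hp hδ) fun y hy => ?_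
  calc tangentBump n p.1 ε y.1 ≤ ε * (η / 2) / ε := tangentBump_le_of_mem_tangentBall hn hp hε hδ hy
    _ < η := by rw [mul_div_cancel_left₀ _ hε.ne']; linarith

theorem continuousAt_tangentBump_of_ne (hn : 0 < n) (ha : lastCoord n a = 0) (hε : 0 < ε)
    {p : HalfSpace n} (hp : lastCoord n p.1 = 0) (hpa : p.1 ≠ a) :
    @ContinuousAt _ _ (tau n ∅) _ (fun y : HalfSpace n => tangentBump n a ε y.1) p := by
  let := tau n ∅
  have hδ : 0 < ‖a - p.1‖ ^ 2 / (4 * ε) := by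
    have := norm_pos_iff.2 (sub_ne_zero.2 hpa.symm)
    positivity
  have hdisj := disjoint_tangentBall hn ha hp hpa.symm hε hδ
    (by rw [mul_div_cancel₀ _ (by positivity)])
  exact continuousAt_const.congr (Filter.mem_of_superset (tangentBall_mem_nhds hp hδ)
    fun y hy => (tangentBump_eq_one hn ha hε y.2 (disjoint_right.1 hdisj hy)).symm)

theorem continuous_tangentBump (hn : 0 < n) (ha : lastCoord n a = 0) (hε : 0 < ε) :
    Continuous[tau n ∅, _] fun y : HalfSpace n => tangentBump n a ε y.1 := by
  let := tau n ∅
  refine continuous_iff_continuousAt.2 fun p => ?_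
  rcases lastCoord_pos_or_eq_zero p with hp | hp
  · exact continuousAt_tangentBump_of_pos hn hε hp
  · by_cases hpa : p.1 = a
    · subst hpa
      exact continuousAt_tangentBump_self hn hε hp
    · exact continuousAt_tangentBump_of_ne hn ha hε hp hpa

end TangentBump

theorem CompletelyRegularSpace.of_isTopologicalBasis {X : Type*} [TopologicalSpace X]
    {B : Set (Set X)} (hB : IsTopologicalBasis B)
    (h : ∀ t ∈ B, ∀ x ∈ t, ∃ f : X → ℝ, Continuous f ∧ f x = 0 ∧ ∀ y ∉ t, 1 ≤ f y) :
    CompletelyRegularSpace X := by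
  refine completelyRegularSpace_iff_isOpen.2 fun x K hK hxK => ?_
  obtain ⟨t, ht, hxt, htK⟩ := hB.exists_subset_of_mem_open hxK hK
  obtain ⟨f, hf, hfx, hft⟩ := h t ht x hxt
  refine ⟨projIcc 0 1 zero_le_one ∘ f, continuous_projIcc.comp hf, ?_, fun y hy => ?_⟩
  · simp [hfx]
  · exact projIcc_of_right_le _ (hft y fun hyt => hy (htK hyt))

theorem exists_continuous_separating_of_mem_niemGen {n : ℕ} (hn : 0 < n)
    {t : Set (HalfSpace n)} (ht : t ∈ niemGen n ∅) {x : HalfSpace n} (hxt : x ∈ t) :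
    ∃ f : HalfSpace n → ℝ, Continuous[tau n ∅, _] f ∧ f x = 0 ∧ ∀ y ∉ t, 1 ≤ f y := by
  let := tau n ∅
  rcases lastCoord_pos_or_eq_zero x with hx | hx
  · obtain ⟨r, hr, -, hrt⟩ := exists_ball_subset_of_mem_niemGen ht hxt hx
    refine ⟨fun y => dist y.1 x.1 / r,
      ((continuous_subtypeVal_tau hn).dist continuous_const).div_const r, by simp,
      fun y hy => (one_le_div hr).2 (not_lt.1 fun h => hy (hrt h))⟩
  · obtain ⟨ε, hε, rfl⟩ := eq_tangentBall_of_mem_niemGen hn ht hxt hx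
    exact ⟨_, continuous_tangentBump hn hx hε, tangentBump_self hx,
      fun y hy => (tangentBump_eq_one hn hx hε y.2 hy).ge⟩

/-- For every `n ≥ 2`, the `n`-dimensional Niemytzki space `(X, τ_N) = (X, τ(∅))`
is Tychonoff: `T1` and completely regular. -/
theorem niemytzki_tychonoff (n : ℕ) (hn : 2 ≤ n) :
    @T1Space (HalfSpace n) (tau n ∅) ∧ @CompletelyRegularSpace (HalfSpace n) (tau n ∅) := by
  have hpos : 0 < n := by omega
  let := tau n ∅
  exact ⟨t1Space_tau hpos, .of_isTopologicalBasis (isTopologicalBasis_niemGen hpos)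
    fun _ ht _ hxt => exists_continuous_separating_of_mem_niemGen hpos ht hxt⟩
end

section
/- For every n ≥ 2 and every subset A of L, if the space (X, τ(A)) is σ-compact then it is second-countable. -/
open Metric Set TopologicalSpace

namespace NiemAux

open Topology

variable {n : ℕ}

def lastIdx (hn : 0 < n) : Fin n := ⟨n - 1, Nat.sub_lt hn one_pos⟩

lemma lastCoord_eq (hn : 0 < n) (x : EuclideanSpace ℝ (Fin n)) :
    lastCoord n x = x (lastIdx hn) := dif_pos hn

lemma eVec_eq (hn : 0 < n) : eVec n = EuclideanSpace.single (lastIdx hn) (1 : ℝ) := dif_pos hn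

lemma coord_dist_le (x y : EuclideanSpace ℝ (Fin n)) (i : Fin n) :
    dist (x i) (y i) ≤ dist x y := by
  rw [EuclideanSpace.dist_eq,
    show dist (x i) (y i) = Real.sqrt (dist (x i) (y i) ^ 2) from (Real.sqrt_sq dist_nonneg).symm]
  exact Real.sqrt_le_sqrt (Finset.single_le_sum (f := fun j => dist (x j) (y j) ^ 2)
    (fun j _ => sq_nonneg _) (Finset.mem_univ i))

lemma abs_lastCoord_sub_le (hn : 0 < n) (x y : EuclideanSpace ℝ (Fin n)) :
    |lastCoord n x - lastCoord n y| ≤ dist x y := by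
  rw [lastCoord_eq hn, lastCoord_eq hn, ← Real.dist_eq]
  exact coord_dist_le x y _

lemma lastCoord_add_smul (hn : 0 < n) (a : EuclideanSpace ℝ (Fin n)) (ε : ℝ) :
    lastCoord n (a + ε • eVec n) = lastCoord n a + ε := by
  rw [lastCoord_eq hn, lastCoord_eq hn, eVec_eq hn]
  simp [EuclideanSpace.single_apply]

lemma dist_add_smul (hn : 0 < n) (a : EuclideanSpace ℝ (Fin n)) (ε : ℝ) :
    dist (a + ε • eVec n) a = |ε| := by
  rw [dist_eq_norm, add_sub_cancel_left, norm_smul, eVec_eq hn,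
    EuclideanSpace.norm_single, norm_one, Real.norm_eq_abs, mul_one]

lemma tangentBall_subset_ball (hn : 0 < n) (a : EuclideanSpace ℝ (Fin n)) {ε : ℝ} (hε : 0 < ε) :
    tangentBall n a ε ⊆ ball a (2 * ε) := by
  intro y hy
  rcases hy with hy | hy
  · rw [mem_singleton_iff] at hy; subst hy
    exact mem_ball_self (by linarith)
  · rw [mem_ball] at hy ⊢
    have hd := dist_add_smul hn a ε
    rw [abs_of_pos hε] at hd
    have ht := dist_triangle y (a + ε • eVec n) a
    linarith

lemma tangentBall_mono (hn : 0 < n) (a : EuclideanSpace ℝ (Fin n)) {r ε : ℝ}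
    (hr : 0 < r) (h : r ≤ ε) : tangentBall n a r ⊆ tangentBall n a ε := by
  intro y hy
  rcases hy with hy | hy
  · exact Or.inl hy
  · right
    rw [mem_ball] at hy ⊢
    have hd : dist (a + r • eVec n) (a + ε • eVec n) = ε - r := by
      rw [dist_eq_norm, show a + r • eVec n - (a + ε • eVec n) = (r - ε) • eVec n by
        rw [sub_smul]; abel, norm_smul, eVec_eq hn, EuclideanSpace.norm_single, norm_one,
        Real.norm_eq_abs, mul_one, abs_of_nonpos (by linarith)]
      ring
    have ht := dist_triangle y (a + r • eVec n) (a + ε • eVec n)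
    linarith

lemma eq_of_mem_tangentBall_bdry (hn : 0 < n) {a : EuclideanSpace ℝ (Fin n)}
    (ha : lastCoord n a = 0) {ε : ℝ} (hε : 0 < ε) {y : EuclideanSpace ℝ (Fin n)}
    (hy : y ∈ tangentBall n a ε) (hy0 : lastCoord n y = 0) : y = a := by
  rcases hy with hy | hy
  · exact hy
  · exfalso
    have h1 := abs_lastCoord_sub_le hn y (a + ε • eVec n)
    rw [lastCoord_add_smul hn, ha, hy0, zero_sub, zero_add, abs_neg, abs_of_pos hε] at h1
    rw [mem_ball] at hy
    linarith

lemma pos_of_mem_ball (hn : 0 < n) {a y : EuclideanSpace ℝ (Fin n)} {ε : ℝ}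
    (hε : ε < lastCoord n a) (hy : y ∈ ball a ε) : 0 < lastCoord n y := by
  have h1 := abs_lastCoord_sub_le hn y a
  rw [mem_ball] at hy
  have h3 := (abs_lt.mp (lt_of_le_of_lt h1 hy)).1
  linarith

lemma isOpen_of_forall_mem {α : Type*} (t : TopologicalSpace α) {S : Set α}
    (h : ∀ x ∈ S, ∃ g, IsOpen[t] g ∧ x ∈ g ∧ g ⊆ S) : IsOpen[t] S := by
  letI := t
  rw [isOpen_iff_forall_mem_open]
  intro x hx
  obtain ⟨g, h1, h2, h3⟩ := h x hx
  exact ⟨g, h3, h1, h2⟩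

lemma isOpen_basic {A : Set (EuclideanSpace ℝ (Fin n))} {s : Set (HalfSpace n)}
    (hs : s ∈ niemGen n A) : IsOpen[tau n A] s :=
  TopologicalSpace.isOpen_generateFrom_of_mem hs

lemma isOpen_of_forall_gen {A : Set (EuclideanSpace ℝ (Fin n))} {S : Set (HalfSpace n)}
    (h : ∀ x ∈ S, ∃ g ∈ niemGen n A, x ∈ g ∧ g ⊆ S) : IsOpen[tau n A] S :=
  isOpen_of_forall_mem _ fun x hx => by
    obtain ⟨g, hg, h1, h2⟩ := h x hx
    exact ⟨g, isOpen_basic hg, h1, h2⟩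

lemma isOpen_preimage_openHalf (hn : 0 < n) (A : Set (EuclideanSpace ℝ (Fin n))) :
    IsOpen[tau n A] (Subtype.val ⁻¹' OpenHalf n : Set (HalfSpace n)) := by
  apply isOpen_of_forall_gen
  intro x hx
  have hx' : 0 < lastCoord n x.1 := hx
  refine ⟨Subtype.val ⁻¹' ball x.1 (lastCoord n x.1 / 2),
    Or.inl (Or.inl ⟨x.1, hx', lastCoord n x.1 / 2, half_pos hx', half_lt_self hx', rfl⟩),
    mem_ball_self (half_pos hx'), ?_⟩
  intro y hy
  exact pos_of_mem_ball hn (half_lt_self hx') hy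

lemma preimage_bdry_eq (A : Set (EuclideanSpace ℝ (Fin n))) :
    (Subtype.val ⁻¹' Bdry n : Set (HalfSpace n)) = (Subtype.val ⁻¹' OpenHalf n)ᶜ := by
  ext x
  simp only [mem_preimage, mem_compl_iff]
  constructor
  · intro h h'
    have h1 : lastCoord n x.1 = 0 := h
    have h2 : 0 < lastCoord n x.1 := h'
    linarith
  · intro h
    have h2 : ¬ 0 < lastCoord n x.1 := h
    have h3 : 0 ≤ lastCoord n x.1 := x.2
    exact le_antisymm (not_lt.mp h2) h3

lemma tau_le_euclid (hn : 0 < n) (A : Set (EuclideanSpace ℝ (Fin n))) (hA : A ⊆ Bdry n) :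
    tau n A ≤ (instTopologicalSpaceSubtype : TopologicalSpace (HalfSpace n)) := by
  intro s hs
  rw [isOpen_induced_iff] at hs
  obtain ⟨U, hU, rfl⟩ := hs
  apply isOpen_of_forall_gen
  intro x hx
  obtain ⟨ε, hε, hball⟩ := Metric.isOpen_iff.mp hU x.1 hx
  by_cases hxA : x.1 ∈ A
  · exact ⟨Subtype.val ⁻¹' ball x.1 ε, Or.inl (Or.inr ⟨x.1, hxA, ε, hε, rfl⟩),
      mem_ball_self hε, preimage_mono hball⟩
  · have hx2 : 0 ≤ lastCoord n x.1 := x.2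
    rcases eq_or_lt_of_le hx2 with h0 | hpos
    · refine ⟨Subtype.val ⁻¹' tangentBall n x.1 (ε / 2),
        Or.inr ⟨x.1, ⟨h0.symm, hxA⟩, ε / 2, half_pos hε, rfl⟩, Or.inl rfl, ?_⟩
      refine preimage_mono (Subset.trans (tangentBall_subset_ball hn x.1 (half_pos hε)) ?_)
      rw [show 2 * (ε / 2) = ε by ring]
      exact hball
    · have hm : 0 < min ε (lastCoord n x.1) := lt_min hε hpos
      have h1 : min ε (lastCoord n x.1) / 2 < lastCoord n x.1 := by
        have := min_le_right ε (lastCoord n x.1); linarith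
      have h2 : min ε (lastCoord n x.1) / 2 ≤ ε := by
        have := min_le_left ε (lastCoord n x.1); linarith
      refine ⟨Subtype.val ⁻¹' ball x.1 (min ε (lastCoord n x.1) / 2),
        Or.inl (Or.inl ⟨x.1, hpos, min ε (lastCoord n x.1) / 2, half_pos hm, h1, rfl⟩),
        mem_ball_self (half_pos hm), ?_⟩
      exact preimage_mono (Subset.trans (ball_subset_ball h2) hball)
lemma countable_inter_compact (hn : 0 < n) {A : Set (EuclideanSpace ℝ (Fin n))}
    (hA : A ⊆ Bdry n) {K : Set (HalfSpace n)} (hK : @IsCompact _ (tau n A) K) :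
    ({x : HalfSpace n | x.1 ∈ Bdry n \ A} ∩ K).Countable := by
  classical
  set Bp : Set (HalfSpace n) := Subtype.val ⁻¹' Bdry n with hBp
  have hBclosed : @IsClosed _ (tau n A) Bp := by
    rw [hBp, preimage_bdry_eq A]
    exact @IsOpen.isClosed_compl _ (tau n A) _ (isOpen_preimage_openHalf hn A)
  have hT : @IsCompact _ (tau n A) (K ∩ Bp) :=
    @IsCompact.inter_right _ (tau n A) _ _ hK hBclosed
  have hle := tau_le_euclid hn A hA
  have compE : ∀ {C : Set (HalfSpace n)}, @IsCompact _ (tau n A) C → IsCompact C := by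
    intro C hC
    have hcont : Continuous[tau n A, instTopologicalSpaceSubtype]
        (id : HalfSpace n → HalfSpace n) := continuous_id_iff_le.mpr hle
    simpa using @IsCompact.image _ _ (tau n A) _ _ _ hC hcont
  obtain ⟨bB, hbBc, -, hbB⟩ := exists_countable_basis (HalfSpace n)
  have key : ∀ x : HalfSpace n, x ∈ {x : HalfSpace n | x.1 ∈ Bdry n \ A} ∩ K →
      ∃ u ∈ bB, x ∈ u ∧ u ∩ (K ∩ Bp) ⊆ {x} := by
    intro x hx
    obtain ⟨hxD, hxK⟩ := hx
    have hxB : lastCoord n x.1 = 0 := hxD.1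
    have hgen : IsOpen[tau n A] (Subtype.val ⁻¹' tangentBall n x.1 1) :=
      isOpen_basic (Or.inr ⟨x.1, hxD, 1, one_pos, rfl⟩)
    have hCcomp : @IsCompact _ (tau n A) ((K ∩ Bp) \ Subtype.val ⁻¹' tangentBall n x.1 1) := by
      have h1 := @IsCompact.inter_right _ (tau n A) _ _ hT
        (@IsOpen.isClosed_compl _ (tau n A) _ hgen)
      simpa [diff_eq] using h1
    have hCclosed : IsClosed ((K ∩ Bp) \ Subtype.val ⁻¹' tangentBall n x.1 1) :=
      (compE hCcomp).isClosed
    have hxmem : x ∈ ((K ∩ Bp) \ Subtype.val ⁻¹' tangentBall n x.1 1)ᶜ := by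
      intro hc
      exact hc.2 (Or.inl rfl)
    obtain ⟨u, hu, hxu, husub⟩ := hbB.exists_subset_of_mem_open hxmem hCclosed.isOpen_compl
    refine ⟨u, hu, hxu, ?_⟩
    rintro y ⟨hyu, hyKB⟩
    have h2 : y ∈ Subtype.val ⁻¹' tangentBall n x.1 1 := by
      by_contra hc
      exact (husub hyu) ⟨hyKB, hc⟩
    have hy0 : lastCoord n y.1 = 0 := hyKB.2
    exact Subtype.ext (eq_of_mem_tangentBall_bdry hn hxB one_pos h2 hy0)
  choose! u hu hxu hsub using key
  apply Set.countable_of_injective_of_countable_image (f := u)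
  · intro x hxS y hyS hxy
    have hyKB : y ∈ K ∩ Bp := ⟨hyS.2, hyS.1.1⟩
    have hmem : y ∈ u x ∩ (K ∩ Bp) := ⟨hxy ▸ hxu y hyS, hyKB⟩
    exact (show y = x from hsub x hxS hmem).symm
  · refine Set.Countable.mono ?_ hbBc
    rintro _ ⟨x, hx, rfl⟩
    exact hu x hx

end NiemAux

open Topology


/-- For every `n ≥ 2` and `A ⊆ L`, if `(X, τ(A))` is σ-compact then it is second countable. -/
theorem tauA_secondCountable_of_sigmaCompact (n : ℕ) (hn : 2 ≤ n)
    (A : Set (EuclideanSpace ℝ (Fin n))) (hA : A ⊆ Bdry n)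
    (h : @SigmaCompactSpace (HalfSpace n) (tau n A)) :
    @SecondCountableTopology (HalfSpace n) (tau n A) := by
  classical
  have hn0 : 0 < n := by omega
  have hDX : ({x : HalfSpace n | x.1 ∈ Bdry n \ A}).Countable := by
    obtain ⟨K, hKc, hKu⟩ := @SigmaCompactSpace.isSigmaCompact_univ _ (tau n A) h
    have heq : {x : HalfSpace n | x.1 ∈ Bdry n \ A} =
        ⋃ i, {x : HalfSpace n | x.1 ∈ Bdry n \ A} ∩ K i := by
      rw [← inter_iUnion, hKu, inter_univ]
    rw [heq]
    exact countable_iUnion fun i => NiemAux.countable_inter_compact hn0 hA (hKc i)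
  have hD : (Bdry n \ A).Countable := by
    refine Set.Countable.mono ?_ (hDX.image Subtype.val)
    intro a ha
    exact ⟨⟨a, le_of_eq (show lastCoord n a = 0 from ha.1).symm⟩, ha, rfl⟩
  obtain ⟨bE, hbEc, -, hbE⟩ := exists_countable_basis (HalfSpace n)
  set Tf : Set (Set (HalfSpace n)) := (fun p : (EuclideanSpace ℝ (Fin n)) × ℚ =>
      Subtype.val ⁻¹' tangentBall n p.1 ((p.2 : ℝ))) '' ((Bdry n \ A) ×ˢ {q : ℚ | 0 < q})
    with hTf
  have hTfc : Tf.Countable := (hD.prod (Set.to_countable _)).image _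
  refine @SecondCountableTopology.mk _ (tau n A) ⟨bE ∪ Tf, hbEc.union hTfc, ?_⟩
  apply le_antisymm
  · apply le_generateFrom
    rintro s (hs | hs)
    · exact (NiemAux.tau_le_euclid hn0 A hA) s (hbE.isOpen hs)
    · rw [hTf] at hs
      obtain ⟨⟨a, q⟩, ⟨haD, hq⟩, rfl⟩ := hs
      exact NiemAux.isOpen_basic (Or.inr ⟨a, haD, (q : ℝ), by exact_mod_cast hq, rfl⟩)
  · have hmono : ∀ s : Set (HalfSpace n), IsOpen s →
        IsOpen[generateFrom (bE ∪ Tf)] s := by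
      intro s hs
      have hle2 : generateFrom (bE ∪ Tf) ≤ generateFrom bE :=
        generateFrom_anti subset_union_left
      rw [← hbE.eq_generateFrom] at hle2
      exact hle2 s hs
    apply le_generateFrom
    rintro s ((hs | hs) | hs)
    · obtain ⟨a, ha, ε, hε, hlt, rfl⟩ := hs
      exact hmono _ (continuous_subtype_val.isOpen_preimage _ isOpen_ball)
    · obtain ⟨a, ha, ε, hε, rfl⟩ := hs
      exact hmono _ (continuous_subtype_val.isOpen_preimage _ isOpen_ball)
    · obtain ⟨a, haD, ε, hε, rfl⟩ := hs
      apply NiemAux.isOpen_of_forall_mem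
      intro x hx
      rcases hx with hxa | hxb
      · obtain ⟨q, hq0, hqε⟩ := exists_rat_btwn hε
        refine ⟨Subtype.val ⁻¹' tangentBall n a ((q : ℝ)),
          TopologicalSpace.isOpen_generateFrom_of_mem
            (Or.inr ⟨⟨a, q⟩, ⟨haD, by exact_mod_cast hq0⟩, rfl⟩),
          Or.inl hxa,
          preimage_mono (NiemAux.tangentBall_mono hn0 a hq0 (le_of_lt hqε))⟩
      · exact ⟨Subtype.val ⁻¹' ball (a + ε • eVec n) ε,
          hmono _ (continuous_subtype_val.isOpen_preimage _ isOpen_ball), hxb,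
          preimage_mono subset_union_right⟩
end
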